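/- arXiv:0910.1123 — 2 statements merged into one kernel-verified Lean document; each statement's English description precedes it below -/
import Mathlib

section
/- (Analytic core of Theorem 1: achievability of the extremal symmetric point) For every x ∈ [1/N, 1], the one-dimensional density evolution map at the extremal symmetric point satisfies F(x) = ((1−p) + p·λ̄^N(x))·λ̄^N(x) < x. Hence density evolution makes strict progress whenever the residual erasure probability is at least 1/N. -/
open Real Filter

noncomputable def qp (p x : ℝ) : ℝ :=
  (Real.sqrt ((1 - p) ^ 2 + 4 * p * x) - (1 - p)) / (2 * p)

noncomputable def aCoeff (p : ℝ) (i : ℕ) : ℝ :=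
  (∑ k ∈ Finset.range i, (Nat.choose (2 * i - 1) k : ℝ) * p ^ k) /
    (i * (1 + p) ^ (2 * i - 1))

noncomputable def Gpart (p : ℝ) (N : ℕ) : ℝ := ∑ i ∈ Finset.Icc 1 N, aCoeff p i

noncomputable def Sp (p x : ℝ) : ℝ := - Real.log (qp p (1 - x))

noncomputable def rhoN (p μ : ℝ) (N : ℕ) (x : ℝ) : ℝ :=
  (μ + (∑ i ∈ Finset.Icc 1 N, aCoeff p i * x ^ i) + x ^ N) / (μ + Gpart p N + 1)

noncomputable def lamBarN (p μ : ℝ) (N : ℕ) (x : ℝ) : ℝ :=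
  Real.exp (-(μ + Gpart p N + 1) * rhoN p μ N (1 - x))

noncomputable def deSym (p μ : ℝ) (N : ℕ) (x : ℝ) : ℝ :=
  ((1 - p) + p * lamBarN p μ N x) * lamBarN p μ N x

noncomputable def cornerMap (p μ : ℝ) (N : ℕ) (α ε₁ ε₂ : ℝ) (y : ℝ) : ℝ :=
  ((1 - p) + p * Real.exp (-(α * (1 - ε₁)))) *
    Real.exp (-(α * (1 - ε₂)) * rhoN p μ N (1 - y))

/-!
Write `y = 1 - x`, `τ = (1 - p)/(1 + p)`, `z = p/(1 + p)^2` (so `τ^2 = 1 - 4z`) and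
`c_i = ∑_{n<i} C(2n, n) z^n`, the partial sums of the expansion of `(1 - 4z)^(-1/2) = 1/τ`.
The root `q > 0` of `p q^2 + (1 - p) q = x` is `(1 + τ)(1 - y)/(τ + √(1 - 4zy))`, and the
binomial sums in `a_i` collapse to `a_i = (1 + τ c_i)/(2i)`. So `-log q` splits as
`-log (1 - y) - log ((1 + τ)/(τ + √(1 - 4zy)))`: the first term exceeds its `N`-term Taylor
polynomial by at most `y^N` as long as `y ≤ 1 - 1/N`, and the second dominates its `N`-term
Taylor polynomial `∑ (1 - τ c_i)/(2i) y^i` because the remainders of `(1 - 4w)^(-1/2)` have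
nonnegative coefficients. Together `-log q ≤ ∑ a_i y^i + y^N < μ + ∑ a_i y^i + y^N`, i.e.
`λ̄^N(x) < q`, and `F` is increasing in `λ̄^N(x)` with value `x` at `q`.
-/

open Finset Set

lemma le_of_hasDerivAt_nonneg {f f' : ℝ → ℝ} {a b : ℝ} (hab : a ≤ b)
    (hf : ∀ x ∈ Icc a b, HasDerivAt f (f' x) x) (hf' : ∀ x ∈ Ioo a b, 0 ≤ f' x) :
    f a ≤ f b := by
  refine monotoneOn_of_hasDerivWithinAt_nonneg (convex_Icc a b)
    (fun x hx ↦ (hf x hx).continuousAt.continuousWithinAt)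
    (fun x hx ↦ (hf x (interior_subset hx)).hasDerivWithinAt) (by simpa using hf')
    (left_mem_Icc.2 hab) (right_mem_Icc.2 hab) hab

lemma one_sub_mul_sum_partialSums {R : Type*} [CommRing R] (a : ℕ → R) (x : R) (k : ℕ) :
    (1 - x) * ∑ j ∈ range k, (∑ i ∈ range (j + 1), a i) * x ^ j
      = ∑ j ∈ range k, a j * x ^ j - (∑ i ∈ range k, a i) * x ^ k := by
  induction k with
  | zero => simp
  | succ k ih =>
    rw [sum_range_succ, mul_add, ih, sum_range_succ, sum_range_succ]
    ring

noncomputable def centralBinomSum (w : ℝ) (k : ℕ) : ℝ :=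
  ∑ j ∈ range k, (j.centralBinom : ℝ) * w ^ j

lemma centralBinomSum_succ (w : ℝ) (k : ℕ) :
    centralBinomSum w (k + 1) = centralBinomSum w k + k.centralBinom * w ^ k :=
  sum_range_succ _ k

/-- `invSqrtDerivCoeff m * (1 - 4 * w) ^ (-m - 1/2)` is the `m`-th derivative of
`(1 - 4 * w) ^ (-1/2)`. -/
noncomputable def invSqrtDerivCoeff (m : ℕ) : ℝ := m.centralBinom * m.factorial

/-- The `k`-th Taylor remainder at `0` of the `m`-th derivative of `(1 - 4 * w) ^ (-1/2)`. -/
noncomputable def invSqrtTaylorRem (m k : ℕ) (w : ℝ) : ℝ :=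
  invSqrtDerivCoeff m * (1 - 4 * w) ^ (-(m : ℝ) - 1 / 2)
    - ∑ j ∈ range k, invSqrtDerivCoeff (m + j) * w ^ j / j.factorial

lemma invSqrtDerivCoeff_succ (m : ℕ) :
    invSqrtDerivCoeff (m + 1) = (4 * m + 2) * invSqrtDerivCoeff m := by
  have h : ((m + 1 : ℕ) : ℝ) * (m + 1).centralBinom = 2 * (2 * m + 1) * m.centralBinom := by
    exact_mod_cast Nat.succ_mul_centralBinom_succ m
  simp only [invSqrtDerivCoeff, Nat.factorial_succ, Nat.cast_mul]
  push_cast at h ⊢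
  linear_combination (m.factorial : ℝ) * h

lemma invSqrtTaylorRem_succ_zero (m k : ℕ) : invSqrtTaylorRem m (k + 1) 0 = 0 := by
  simp [invSqrtTaylorRem, sum_range_succ']

lemma invSqrtTaylorRem_zero_left (k : ℕ) {w : ℝ} (hw : 4 * w ≤ 1) :
    invSqrtTaylorRem 0 k w = (√(1 - 4 * w))⁻¹ - centralBinomSum w k := by
  have hpow : (1 - 4 * w) ^ (-(1 / 2) : ℝ) = (√(1 - 4 * w))⁻¹ := by
    rw [Real.rpow_neg (by linarith), Real.sqrt_eq_rpow]
  simp only [invSqrtTaylorRem, centralBinomSum, invSqrtDerivCoeff, zero_add,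
    Nat.centralBinom_zero, Nat.factorial_zero, Nat.cast_one, one_mul, CharP.cast_eq_zero,
    neg_zero, zero_sub, hpow]
  refine congrArg _ (sum_congr rfl fun j _ ↦ ?_)
  field_simp

lemma hasDerivAt_invSqrtTaylorRem (m k : ℕ) {w : ℝ} (hw : 4 * w < 1) :
    HasDerivAt (invSqrtTaylorRem m (k + 1)) (invSqrtTaylorRem (m + 1) k w) w := by
  have hbase : HasDerivAt (fun w : ℝ ↦ 1 - 4 * w) (-4) w := by
    simpa using ((hasDerivAt_id w).const_mul (4 : ℝ)).const_sub 1
  have hmain := ((hbase.rpow_const (p := -(m : ℝ) - 1 / 2) (Or.inl (by linarith))).const_mul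
    (invSqrtDerivCoeff m))
  have hsum : HasDerivAt
      (fun w : ℝ ↦ ∑ j ∈ range (k + 1), invSqrtDerivCoeff (m + j) * w ^ j / j.factorial)
      (∑ j ∈ range k, invSqrtDerivCoeff (m + 1 + j) * w ^ j / j.factorial) w := by
    have := HasDerivAt.fun_sum (u := range (k + 1)) fun j _ ↦
      ((hasDerivAt_pow j w).const_mul (invSqrtDerivCoeff (m + j))).div_const (j.factorial : ℝ)
    refine this.congr_deriv ?_
    rw [sum_range_succ']
    simp only [CharP.cast_eq_zero, zero_mul, mul_zero, zero_div, add_zero]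
    refine sum_congr rfl fun j _ ↦ ?_
    rw [show m + (j + 1) = m + 1 + j by ring, Nat.factorial_succ]
    push_cast
    field_simp
  refine (hmain.sub hsum).congr_deriv ?_
  have hexp : -(m : ℝ) - 1 / 2 - 1 = -((m + 1 : ℕ) : ℝ) - 1 / 2 := by push_cast; ring
  rw [invSqrtTaylorRem, invSqrtDerivCoeff_succ, hexp]
  ring

/-- Since all Taylor coefficients of `(1 - 4 * w) ^ (-1/2)` are nonnegative,
`w ↦ invSqrtTaylorRem m k w / w ^ k` is nondecreasing; without power series this is proved by
differentiating in `z` and inducting on `k`. -/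
lemma invSqrtTaylorRem_mul_le (k : ℕ) :
    ∀ (m : ℕ) {z y : ℝ}, 0 ≤ z → 4 * z < 1 → 0 ≤ y → y ≤ 1 →
      invSqrtTaylorRem m k (z * y) ≤ y ^ k * invSqrtTaylorRem m k z := by
  induction k with
  | zero =>
    intro m z y hz hz4 hy0 hy1
    simp only [invSqrtTaylorRem, range_zero, sum_empty, sub_zero, pow_zero, one_mul]
    have hm : 0 ≤ invSqrtDerivCoeff m := by unfold invSqrtDerivCoeff; positivity
    have hexp : -(m : ℝ) - 1 / 2 ≤ 0 := by linarith [m.cast_nonneg (α := ℝ)]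
    exact mul_le_mul_of_nonneg_left
      (Real.rpow_le_rpow_of_nonpos (by linarith) (by nlinarith) hexp) hm
  | succ k ih =>
    intro m z y hz hz4 hy0 hy1
    have hderiv : ∀ x ∈ Icc 0 z, HasDerivAt
        (fun x ↦ y ^ (k + 1) * invSqrtTaylorRem m (k + 1) x - invSqrtTaylorRem m (k + 1) (x * y))
        (y ^ (k + 1) * invSqrtTaylorRem (m + 1) k x - invSqrtTaylorRem (m + 1) k (x * y) * y) x :=
      fun x hx ↦
        ((hasDerivAt_invSqrtTaylorRem m k (by linarith [hx.2])).const_mul _).sub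
          ((hasDerivAt_invSqrtTaylorRem m k (by nlinarith [hx.1, hx.2])).comp x
            (hasDerivAt_mul_const y))
    have hmono := le_of_hasDerivAt_nonneg hz hderiv fun x hx ↦ by
      have := ih (m + 1) hx.1.le (by linarith [hx.2]) hy0 hy1
      rw [pow_succ]
      nlinarith
    simp only [zero_mul, invSqrtTaylorRem_succ_zero, mul_zero, sub_zero] at hmono
    linarith

lemma inv_sqrt_sub_centralBinomSum_le (k : ℕ) {z x : ℝ} (hz : 0 ≤ z) (hz4 : 4 * z < 1)
    (hx0 : 0 ≤ x) (hx1 : x ≤ 1) :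
    (√(1 - 4 * z * x))⁻¹ - centralBinomSum (z * x) k
      ≤ x ^ k * ((√(1 - 4 * z))⁻¹ - centralBinomSum z k) := by
  have h := invSqrtTaylorRem_mul_le k 0 hz hz4 hx0 hx1
  rwa [invSqrtTaylorRem_zero_left k (by nlinarith), invSqrtTaylorRem_zero_left k hz4.le,
    ← mul_assoc] at h

lemma hasDerivAt_pow_succ_div (j : ℕ) (x : ℝ) :
    HasDerivAt (fun y : ℝ ↦ y ^ (j + 1) / (j + 1)) (x ^ j) x := by
  refine ((hasDerivAt_pow (j + 1) x).div_const ((j : ℝ) + 1)).congr_deriv ?_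
  push_cast
  field_simp

lemma neg_log_one_sub_le_sum_add_pow (n : ℕ) {y : ℝ} (hy0 : 0 ≤ y)
    (hy : y ≤ 1 - 1 / (n + 1)) :
    -log (1 - y) ≤ ∑ j ∈ range (n + 1), y ^ (j + 1) / (j + 1) + y ^ (n + 1) := by
  have hn : (0 : ℝ) < n + 1 := by positivity
  have hy1 : y < 1 := by linarith [one_div_pos.2 hn]
  have hderiv : ∀ x ∈ Icc 0 y, HasDerivAt
      (fun x : ℝ ↦ ∑ j ∈ range (n + 1), x ^ (j + 1) / (j + 1) + x ^ (n + 1) + log (1 - x))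
      (∑ j ∈ range (n + 1), x ^ j + (n + 1) * x ^ n + -1 / (1 - x)) x := by
    intro x hx
    have hpow : HasDerivAt (fun x : ℝ ↦ x ^ (n + 1)) ((n + 1) * x ^ n) x := by
      simpa using hasDerivAt_pow (n + 1) x
    have hlog : HasDerivAt (fun x : ℝ ↦ log (1 - x)) (-1 / (1 - x)) x :=
      (by simpa using (hasDerivAt_id x).const_sub 1 : HasDerivAt (fun x : ℝ ↦ 1 - x) (-1) x).log
        (by linarith [hx.2])
    exact ((HasDerivAt.fun_sum fun j _ ↦ hasDerivAt_pow_succ_div j x).add hpow).add hlog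
  have hmono := le_of_hasDerivAt_nonneg hy0 hderiv fun x hx ↦ by
    have h1x : 0 < 1 - x := by linarith [hx.2]
    have hgeom := mul_neg_geom_sum x (n + 1)
    have hfac : 1 ≤ (n + 1) * (1 - x) := by
      have : 1 / (n + 1) ≤ 1 - x := by linarith [hx.2]
      rwa [div_le_iff₀ hn, mul_comm] at this
    have key : (1 - x) * (∑ j ∈ range (n + 1), x ^ j + (n + 1) * x ^ n + -1 / (1 - x))
        = x ^ n * ((n + 1) * (1 - x) - x) := by
      rw [mul_add, mul_add, hgeom, mul_div_cancel₀ _ h1x.ne']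
      ring
    have : 0 ≤ x ^ n * ((n + 1) * (1 - x) - x) :=
      mul_nonneg (pow_nonneg hx.1.le n) (by linarith [hx.2])
    rw [← key] at this
    exact nonneg_of_mul_nonneg_right this h1x
  simp only [ne_eq, Nat.add_eq_zero_iff, one_ne_zero, and_false, not_false_eq_true,
    zero_pow, zero_div, sum_const_zero, sub_zero, log_one, add_zero] at hmono
  linarith

section CentralBinomLog

variable {z τ : ℝ}

/-- After multiplying by `2 * (1 - x)`, the right-hand side becomes `1 - τ / √(1 - 4 * z * x)` and
the left-hand side telescopes to that minus `τ * (x ^ k * R z - R (z * x))`, where `R` is the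
`k`-th Taylor remainder of `(1 - 4 * w) ^ (-1/2)`. -/
lemma sum_mul_pow_le_deriv (hz : 0 ≤ z) (hτ : 0 < τ) (hτz : τ ^ 2 = 1 - 4 * z) (k : ℕ)
    {x : ℝ} (hx0 : 0 ≤ x) (hx1 : x < 1) :
    ∑ j ∈ range k, (1 - τ * centralBinomSum z (j + 1)) / 2 * x ^ j
      ≤ 2 * z / (√(1 - 4 * z * x) * (τ + √(1 - 4 * z * x))) := by
  have hz4 : 4 * z < 1 := by nlinarith
  set S := √(1 - 4 * z * x)
  have hS2 : S ^ 2 = 1 - 4 * z * x := Real.sq_sqrt (by nlinarith)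
  have hS : 0 < S := Real.sqrt_pos.2 (by nlinarith)
  have h1x : 0 < 1 - x := by linarith
  have hsum : 2 * (1 - x) * ∑ j ∈ range k, (1 - τ * centralBinomSum z (j + 1)) / 2 * x ^ j
      = (1 - x ^ k) - τ * (centralBinomSum (z * x) k - centralBinomSum z k * x ^ k) := by
    have htel : (1 - x) * ∑ j ∈ range k, centralBinomSum z (j + 1) * x ^ j
        = centralBinomSum (z * x) k - centralBinomSum z k * x ^ k := by
      simpa only [centralBinomSum, mul_assoc, ← mul_pow] using
        one_sub_mul_sum_partialSums (fun j ↦ (j.centralBinom : ℝ) * z ^ j) x k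
    rw [← htel, ← mul_neg_geom_sum]
    simp only [mul_sum, ← sum_sub_distrib]
    exact sum_congr rfl fun j _ ↦ by ring
  have hderiv : 2 * (1 - x) * (2 * z / (S * (τ + S))) = 1 - τ / S := by
    field_simp
    nlinarith
  have hrem := inv_sqrt_sub_centralBinomSum_le k hz hz4 hx0 hx1.le
  rw [← hτz, Real.sqrt_sq hτ.le] at hrem
  have hremτ : τ * S⁻¹ - τ * centralBinomSum (z * x) k
      ≤ x ^ k - τ * centralBinomSum z k * x ^ k := calc
    _ = τ * (S⁻¹ - centralBinomSum (z * x) k) := by ring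
    _ ≤ τ * (x ^ k * (τ⁻¹ - centralBinomSum z k)) := mul_le_mul_of_nonneg_left hrem hτ.le
    _ = _ := by field_simp
  refine le_of_mul_le_mul_left ?_ (by linarith : (0 : ℝ) < 2 * (1 - x))
  rw [hsum, hderiv, div_eq_mul_inv]
  linarith

lemma sum_le_log_one_add_sub_log (hz : 0 ≤ z) (hτ : 0 < τ) (hτz : τ ^ 2 = 1 - 4 * z) (k : ℕ)
    {y : ℝ} (hy0 : 0 ≤ y) (hy1 : y ≤ 1) :
    ∑ j ∈ range k, (1 - τ * centralBinomSum z (j + 1)) / 2 * (y ^ (j + 1) / (j + 1))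
      ≤ log (1 + τ) - log (τ + √(1 - 4 * z * y)) := by
  have hderiv : ∀ x ∈ Icc 0 y, HasDerivAt
      (fun x : ℝ ↦ log (1 + τ) - log (τ + √(1 - 4 * z * x))
        - ∑ j ∈ range k, (1 - τ * centralBinomSum z (j + 1)) / 2 * (x ^ (j + 1) / (j + 1)))
      (2 * z / (√(1 - 4 * z * x) * (τ + √(1 - 4 * z * x)))
        - ∑ j ∈ range k, (1 - τ * centralBinomSum z (j + 1)) / 2 * x ^ j) x := by
    intro x hx
    have hpos : 0 < 1 - 4 * z * x := by nlinarith [hx.2]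
    have hinner : HasDerivAt (fun x : ℝ ↦ 1 - 4 * z * x) (-(4 * z)) x := by
      simpa using ((hasDerivAt_id x).const_mul (4 * z)).const_sub 1
    have hlog := (((hinner.sqrt hpos.ne').const_add τ).log
      (by positivity)).const_sub (log (1 + τ))
    have hsum := HasDerivAt.fun_sum (u := range k) fun j _ ↦
      (hasDerivAt_pow_succ_div j x).const_mul ((1 - τ * centralBinomSum z (j + 1)) / 2)
    refine (hlog.sub hsum).congr_deriv ?_
    have hS := Real.sqrt_pos.2 hpos
    field_simp
    ring
  have := le_of_hasDerivAt_nonneg hy0 hderiv fun x hx ↦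
    sub_nonneg.2 (sum_mul_pow_le_deriv hz hτ hτz k hx.1.le (by linarith [hx.2]))
  simp only [mul_zero, sub_zero, Real.sqrt_one, add_comm τ 1, ne_eq, Nat.add_eq_zero_iff,
    one_ne_zero, and_false, not_false_eq_true, zero_pow, zero_div, sum_const_zero] at this
  linarith

end CentralBinomLog

noncomputable def binomPartialSum (p : ℝ) (n m : ℕ) : ℝ :=
  ∑ k ∈ range m, (n.choose k : ℝ) * p ^ k

lemma binomPartialSum_succ_succ (p : ℝ) (n m : ℕ) :
    binomPartialSum p (n + 1) (m + 1)
      = binomPartialSum p n (m + 1) + p * binomPartialSum p n m := by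
  have hshift : ∀ k ∈ range m, p * ((n.choose k : ℝ) * p ^ k) = n.choose k * p ^ (k + 1) :=
    fun k _ ↦ by ring
  simp only [binomPartialSum, sum_range_succ' _ m, Nat.choose_succ_succ, Nat.cast_add, add_mul,
    sum_add_distrib, mul_sum, sum_congr rfl hshift, Nat.choose_zero_right]
  ring

lemma binomPartialSum_odd_succ (p : ℝ) (j : ℕ) :
    binomPartialSum p (2 * j + 3) (j + 2) = (1 + p) ^ 2 * binomPartialSum p (2 * j + 1) (j + 1)
      + (1 - p) * ((2 * j + 1).choose j : ℝ) * p ^ (j + 1) := by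
  have e1 := binomPartialSum_succ_succ p (2 * j + 2) (j + 1)
  have e2 := binomPartialSum_succ_succ p (2 * j + 1) (j + 1)
  have e3 := binomPartialSum_succ_succ p (2 * j + 1) j
  have e4 : binomPartialSum p (2 * j + 1) (j + 2) = binomPartialSum p (2 * j + 1) (j + 1)
      + ((2 * j + 1).choose j : ℝ) * p ^ (j + 1) := by
    rw [binomPartialSum, sum_range_succ, ← Nat.choose_symm_half]
    rfl
  have e5 : binomPartialSum p (2 * j + 1) (j + 1) = binomPartialSum p (2 * j + 1) j
      + ((2 * j + 1).choose j : ℝ) * p ^ j := by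
    rw [binomPartialSum, sum_range_succ]
    rfl
  rw [e1, e2, e3, e4, e5]
  ring

noncomputable def tauP (p : ℝ) : ℝ := (1 - p) / (1 + p)

noncomputable def zP (p : ℝ) : ℝ := p / (1 + p) ^ 2

lemma tauP_sq {p : ℝ} (hp : 0 < 1 + p) : tauP p ^ 2 = 1 - 4 * zP p := by
  simp only [tauP, zP]
  field_simp
  ring

lemma centralBinom_succ_eq_two_mul_choose (j : ℕ) :
    (j + 1).centralBinom = 2 * (2 * j + 1).choose j := by
  rw [Nat.centralBinom_eq_two_mul_choose, show 2 * (j + 1) = 2 * j + 1 + 1 by ring,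
    Nat.choose_succ_succ, Nat.choose_symm_half]
  ring

lemma two_mul_binomPartialSum_div {p : ℝ} (hp : 0 < 1 + p) (i : ℕ) :
    2 * binomPartialSum p (2 * i + 1) (i + 1) / (1 + p) ^ (2 * i + 1)
      = 1 + tauP p * centralBinomSum (zP p) (i + 1) := by
  induction i with
  | zero =>
    simp only [binomPartialSum, centralBinomSum, tauP, zero_add, mul_zero, range_one,
      sum_singleton, Nat.choose_succ_self_right, Nat.centralBinom_zero, Nat.cast_one, pow_zero,
      mul_one, pow_one]
    field_simp
    ring
  | succ j ih =>
    have hb : binomPartialSum p (2 * j + 1) (j + 1)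
        = (1 + tauP p * centralBinomSum (zP p) (j + 1)) * (1 + p) ^ (2 * j + 1) / 2 := by
      rw [← ih]
      field_simp
    rw [show 2 * (j + 1) + 1 = 2 * j + 3 by ring, binomPartialSum_odd_succ, hb,
      centralBinomSum_succ _ (j + 1), centralBinom_succ_eq_two_mul_choose]
    have hz : zP p ^ (j + 1) = p ^ (j + 1) / (1 + p) ^ (2 * j + 2) := by
      rw [zP, div_pow, ← pow_mul]
      ring_nf
    rw [hz, tauP]
    push_cast
    field_simp
    ring

lemma aCoeff_succ {p : ℝ} (hp : 0 < 1 + p) (i : ℕ) :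
    aCoeff p (i + 1) = (1 + tauP p * centralBinomSum (zP p) (i + 1)) / (2 * (i + 1)) := by
  rw [← two_mul_binomPartialSum_div hp, aCoeff, show 2 * (i + 1) - 1 = 2 * i + 1 by omega]
  push_cast
  field_simp
  rfl

section ErasureCorrelation

variable {p : ℝ}

lemma qp_quadratic (hp : 0 < p) {x : ℝ} (hx : 0 ≤ x) :
    p * qp p x ^ 2 + (1 - p) * qp p x = x := by
  have hsq := Real.sq_sqrt (by positivity : 0 ≤ (1 - p) ^ 2 + 4 * p * x)
  rw [qp]
  set s := √((1 - p) ^ 2 + 4 * p * x)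
  field_simp
  linear_combination hsq

lemma qp_one_sub_eq (hp0 : 0 < p) (hp1 : p < 1) {y : ℝ} (hy : y ≤ 1) :
    qp p (1 - y) = (1 + tauP p) * (1 - y) / (tauP p + √(1 - 4 * zP p * y)) := by
  have hp : 0 < 1 + p := by linarith
  have hτ : 0 < tauP p := div_pos (by linarith) hp
  have hz : 4 * zP p * y ≤ 4 * zP p := by
    have : 0 ≤ zP p := by unfold zP; positivity
    nlinarith
  have hS2 := Real.sq_sqrt (by nlinarith [tauP_sq hp] : 0 ≤ 1 - 4 * zP p * y)
  have hdisc : (1 - p) ^ 2 + 4 * p * (1 - y) = ((1 + p) * √(1 - 4 * zP p * y)) ^ 2 := by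
    rw [mul_pow, hS2, zP]
    field_simp
    ring
  rw [qp, hdisc, Real.sqrt_sq (by positivity), div_eq_div_iff (by positivity) (by positivity)]
  have hzP : zP p * (1 + p) ^ 2 = p := by
    rw [zP]
    field_simp
  rw [tauP] at hτ ⊢
  field_simp
  linear_combination (1 + p) ^ 2 * hS2 - 4 * y * hzP

lemma qp_pos (hp0 : 0 < p) (hp1 : p < 1) {x : ℝ} (hx : 0 < x) : 0 < qp p x := by
  refine div_pos (sub_pos.2 ?_) (by positivity)
  rw [Real.lt_sqrt (by linarith)]
  nlinarith

lemma neg_log_qp_one_sub_le (hp0 : 0 < p) (hp1 : p < 1) (n : ℕ) {y : ℝ} (hy0 : 0 ≤ y)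
    (hy : y ≤ 1 - 1 / (n + 1)) :
    -log (qp p (1 - y)) ≤ ∑ i ∈ Icc 1 (n + 1), aCoeff p i * y ^ i + y ^ (n + 1) := by
  have hp : 0 < 1 + p := by linarith
  have hτ : 0 < tauP p := div_pos (by linarith) hp
  have hy1 : y < 1 := by linarith [one_div_pos.2 (by positivity : (0 : ℝ) < n + 1)]
  have hlog : -log (qp p (1 - y))
      = -log (1 - y) - (log (1 + tauP p) - log (tauP p + √(1 - 4 * zP p * y))) := by
    rw [qp_one_sub_eq hp0 hp1 hy1.le, log_div (by positivity) (by positivity),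
      log_mul (by positivity) (by linarith)]
    ring
  have hsum : ∑ i ∈ Icc 1 (n + 1), aCoeff p i * y ^ i
      = ∑ j ∈ range (n + 1), y ^ (j + 1) / (j + 1) - ∑ j ∈ range (n + 1),
          (1 - tauP p * centralBinomSum (zP p) (j + 1)) / 2 * (y ^ (j + 1) / (j + 1)) := by
    rw [← sum_sub_distrib, ← Finset.Ico_add_one_right_eq_Icc, sum_Ico_eq_sum_range]
    refine sum_congr rfl fun j _ ↦ ?_
    rw [add_comm 1 j, aCoeff_succ hp]
    field_simp
    ring
  have hz : 0 ≤ zP p := by unfold zP; positivity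
  rw [hlog, hsum]
  linarith [neg_log_one_sub_le_sum_add_pow n hy0 hy,
    sum_le_log_one_add_sub_log hz hτ (tauP_sq hp) (n + 1) hy0 hy1.le]

end ErasureCorrelation

lemma lamBarN_eq {p μ : ℝ} (hp : 0 ≤ p) (hμ : 0 ≤ μ) (N : ℕ) (x : ℝ) :
    lamBarN p μ N x = exp (-(μ + ∑ i ∈ Icc 1 N, aCoeff p i * (1 - x) ^ i + (1 - x) ^ N)) := by
  have hG : 0 ≤ Gpart p N := sum_nonneg fun i _ ↦ by unfold aCoeff; positivity
  rw [lamBarN, rhoN, neg_mul, mul_div_cancel₀ _ (by linarith)]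

theorem stmt9 (p : ℝ) (hp0 : 0 < p) (hp1 : p < 1) (μ : ℝ) (hμ : 0 < μ)
    (N : ℕ) (hN : 1 ≤ N) :
    ∀ x ∈ Set.Icc (1 / (N : ℝ)) 1, deSym p μ N x < x := by
  obtain ⟨n, rfl⟩ : ∃ n, N = n + 1 := ⟨N - 1, by omega⟩
  rintro x ⟨hx₁, hx₂⟩
  push_cast at hx₁
  have hx₀ : 0 < x := lt_of_lt_of_le (by positivity) hx₁
  have hq₀ := qp_pos hp0 hp1 hx₀
  have hlog :
      -log (qp p x) ≤ ∑ i ∈ Icc 1 (n + 1), aCoeff p i * (1 - x) ^ i + (1 - x) ^ (n + 1) := by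
    simpa using neg_log_qp_one_sub_le hp0 hp1 n (y := 1 - x) (by linarith) (by linarith)
  have hL : lamBarN p μ (n + 1) x < qp p x := by
    rw [lamBarN_eq hp0.le hμ.le, ← exp_log hq₀]
    exact exp_lt_exp.2 (by linarith)
  have hL₀ : 0 < lamBarN p μ (n + 1) x := exp_pos _
  calc deSym p μ (n + 1) x
      = ((1 - p) + p * lamBarN p μ (n + 1) x) * lamBarN p μ (n + 1) x := rfl
    _ < p * qp p x ^ 2 + (1 - p) * qp p x := by nlinarith [mul_lt_mul_of_pos_left hL hp0]
    _ = x := qp_quadratic hp0 hx₀.le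
end

section
/- Every fixed point y ∈ (0,1] of the corner-point density evolution map G(y) = ((1−p) + p·e^{−α(1−ε₁)})·exp(−α(1−ε₂)·ρ^N(1−y)) satisfies y ≥ ((1−p)·e^{−β(μ+1)})^{1/(1−β)}, a strictly positive constant independent of the truncation level N. -/
open Real Filter

/-!
Write `x = 1 - y` and `D = μ + G_N(p) + 1`. Each coefficient `a_i(p)` is at most `1 / i`,
because its numerator is a partial sum of the binomial expansion of `(1 + p)^(2i-1)`; hence
`D ρ^N(x) ≤ μ + 1 + ∑ xⁱ / i ≤ μ + 1 - log y`, a bound free of `N`. Since `α (1 - ε₂) = β D`, a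
fixed point satisfies `y = G(y) ≥ (1 - p) e^{-β (μ + 1)} y^β`, and `β < 1` lets one solve for `y`.
-/

open Finset

lemma sum_range_choose_mul_pow_le_one_add_pow {p : ℝ} (hp : 0 ≤ p) {i m : ℕ} (him : i ≤ m + 1) :
    ∑ k ∈ range i, (m.choose k : ℝ) * p ^ k ≤ (1 + p) ^ m := by
  have hbinom : (1 + p) ^ m = ∑ k ∈ range (m + 1), (m.choose k : ℝ) * p ^ k := by
    rw [add_comm, add_pow]
    simp only [one_pow, mul_one, mul_comm]
  rw [hbinom]
  exact sum_le_sum_of_subset_of_nonneg (range_subset_range.2 him)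
    fun k _ _ => mul_nonneg (Nat.cast_nonneg _) (pow_nonneg hp k)

lemma aCoeff_nonneg {p : ℝ} (hp : 0 ≤ p) (i : ℕ) : 0 ≤ aCoeff p i :=
  div_nonneg (sum_nonneg fun k _ => mul_nonneg (Nat.cast_nonneg _) (pow_nonneg hp k))
    (mul_nonneg (Nat.cast_nonneg _) (pow_nonneg (by linarith) _))

lemma aCoeff_le_one_div {p : ℝ} (hp : 0 ≤ p) (i : ℕ) : aCoeff p i ≤ 1 / i := by
  have hpow : (0 : ℝ) < (1 + p) ^ (2 * i - 1) := pow_pos (by linarith) _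
  calc aCoeff p i ≤ (1 + p) ^ (2 * i - 1) / (i * (1 + p) ^ (2 * i - 1)) :=
        div_le_div_of_nonneg_right (sum_range_choose_mul_pow_le_one_add_pow hp (by omega))
          (mul_nonneg (Nat.cast_nonneg _) hpow.le)
    _ = 1 / i := by rw [mul_comm (i : ℝ), ← div_div, div_self hpow.ne']

lemma Gpart_nonneg {p : ℝ} (hp : 0 ≤ p) (N : ℕ) : 0 ≤ Gpart p N :=
  sum_nonneg fun i _ => aCoeff_nonneg hp i

lemma sum_Icc_pow_div_le_neg_log {x : ℝ} (hx0 : 0 ≤ x) (hx1 : x < 1) (N : ℕ) :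
    ∑ i ∈ Icc 1 N, x ^ i / i ≤ -log (1 - x) := by
  rw [← Ico_add_one_right_eq_Icc, sum_Ico_eq_sum_range, add_tsub_cancel_right]
  simp only [add_comm 1, Nat.cast_add, Nat.cast_one]
  exact sum_le_hasSum (L := SummationFilter.unconditional ℕ) (range N)
    (fun n _ => by positivity) (hasSum_pow_div_log_of_abs_lt_one (by rwa [abs_of_nonneg hx0]))

lemma sum_aCoeff_mul_pow_le_neg_log {p x : ℝ} (hp : 0 ≤ p) (hx0 : 0 ≤ x) (hx1 : x < 1)
    (N : ℕ) : ∑ i ∈ Icc 1 N, aCoeff p i * x ^ i ≤ -log (1 - x) :=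
  calc ∑ i ∈ Icc 1 N, aCoeff p i * x ^ i ≤ ∑ i ∈ Icc 1 N, x ^ i / i :=
        sum_le_sum fun i _ => by
          rw [div_eq_mul_one_div, mul_comm (x ^ i)]
          exact mul_le_mul_of_nonneg_right (aCoeff_le_one_div hp i) (pow_nonneg hx0 i)
    _ ≤ -log (1 - x) := sum_Icc_pow_div_le_neg_log hx0 hx1 N

lemma mul_rhoN_le {p μ x : ℝ} (hp : 0 ≤ p) (hμ : 0 ≤ μ) (hx0 : 0 ≤ x) (hx1 : x < 1) (N : ℕ) :
    (μ + Gpart p N + 1) * rhoN p μ N x ≤ μ + 1 - log (1 - x) := by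
  have hD : μ + Gpart p N + 1 ≠ 0 := by linarith [Gpart_nonneg hp N]
  rw [rhoN, mul_div_cancel₀ _ hD]
  linarith [sum_aCoeff_mul_pow_le_neg_log hp hx0 hx1 N, pow_le_one₀ (n := N) hx0 hx1.le]

lemma mul_exp_mul_rpow_le_cornerMap {p μ α β ε₁ ε₂ y : ℝ} (hp0 : 0 ≤ p) (hp1 : p ≤ 1)
    (hμ : 0 ≤ μ) (N : ℕ) (hαβ : α * (1 - ε₂) = β * (μ + Gpart p N + 1)) (hβ : 0 ≤ β)
    (hy0 : 0 < y) (hy1 : y ≤ 1) :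
    (1 - p) * exp (-(β * (μ + 1))) * y ^ β ≤ cornerMap p μ N α ε₁ ε₂ y := by
  have hrho := mul_rhoN_le hp0 hμ (x := 1 - y) (by linarith) (by linarith) N
  rw [sub_sub_cancel] at hrho
  have hexp : exp (-(β * (μ + 1))) * y ^ β ≤ exp (-(α * (1 - ε₂)) * rhoN p μ N (1 - y)) := by
    rw [rpow_def_of_pos hy0, ← exp_add, exp_le_exp, hαβ]
    linarith [mul_le_mul_of_nonneg_left hrho hβ]
  have hcoef : 1 - p ≤ (1 - p) + p * exp (-(α * (1 - ε₁))) := by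
    have := mul_nonneg hp0 (exp_pos (-(α * (1 - ε₁)))).le
    linarith
  rw [cornerMap, mul_assoc]
  exact mul_le_mul hcoef hexp (by positivity) (by linarith)

lemma rpow_one_div_one_sub_le_of_mul_rpow_le {c y β : ℝ} (hc : 0 ≤ c) (hy : 0 < y) (hβ : β < 1)
    (h : c * y ^ β ≤ y) : c ^ (1 / (1 - β)) ≤ y := by
  have hβ' : 0 < 1 - β := by linarith
  have hc_le : c ≤ y ^ (1 - β) := by
    rw [rpow_sub hy, rpow_one, le_div_iff₀ (rpow_pos_of_pos hy β)]
    exact h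
  calc c ^ (1 / (1 - β)) ≤ (y ^ (1 - β)) ^ (1 / (1 - β)) := by gcongr
    _ = y := by rw [← rpow_mul hy.le, mul_one_div_cancel hβ'.ne', rpow_one]

theorem stmt14_general (p : ℝ) (hp0 : 0 < p) (hp1 : p < 1) (μ : ℝ) (hμ : 0 < μ)
    (N : ℕ)
    (ε ε₁ ε₂ : ℝ)
    (α β : ℝ) (hα : α = (μ + Gpart p N + 1) / (1 - ε)) (hβ : β = (1 - ε₂) / (1 - ε))
    (hβ0 : 0 < β) (hβ1 : β < 1) :
    ∀ y : ℝ, 0 < y → y ≤ 1 → cornerMap p μ N α ε₁ ε₂ y = y →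
      ((1 - p) * Real.exp (-(β * (μ + 1)))) ^ (1 / (1 - β)) ≤ y := by
  intro y hy0 hy1 hfix
  have hαβ : α * (1 - ε₂) = β * (μ + Gpart p N + 1) := by rw [hα, hβ]; ring
  have hlower := mul_exp_mul_rpow_le_cornerMap (ε₁ := ε₁) hp0.le hp1.le hμ.le N hαβ hβ0.le hy0 hy1
  rw [hfix] at hlower
  exact rpow_one_div_one_sub_le_of_mul_rpow_le
    (mul_nonneg (by linarith) (exp_pos _).le) hy0 hβ1 hlower

theorem stmt14 (p : ℝ) (hp0 : 0 < p) (hp1 : p < 1) (μ : ℝ) (hμ : 0 < μ)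
    (N : ℕ) (hN : 1 ≤ N)
    (ε ε₁ ε₂ : ℝ) (hε : ε ∈ Set.Ico (0 : ℝ) 1) (hε₁ : ε₁ ∈ Set.Ico (0 : ℝ) 1)
    (hε₂ : ε₂ ∈ Set.Ico (0 : ℝ) 1) (hεε₂ : ε < ε₂)
    (α β : ℝ) (hα : α = (μ + Gpart p N + 1) / (1 - ε)) (hβ : β = (1 - ε₂) / (1 - ε))
    (hβ0 : 0 < β) (hβ1 : β < 1) :
    ∀ y : ℝ, 0 < y → y ≤ 1 → cornerMap p μ N α ε₁ ε₂ y = y →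
      ((1 - p) * Real.exp (-(β * (μ + 1)))) ^ (1 / (1 - β)) ≤ y :=
  stmt14_general p hp0 hp1 μ hμ N ε ε₁ ε₂ α β hα hβ hβ0 hβ1
end
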